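/- arXiv:2409.14186 — 2 statements merged into one kernel-verified Lean document; each statement's English description precedes it below -/
import Mathlib

section
/- Let X be a geodesic metric space, o ∈ X, and for x₁, x₂ ∈ X define R_o(x₁,x₂) = sup{ r ≥ 0 : x₁ and x₂ lie in the same path component of X \ B(o,r) } (with R_o(x,x) = d(x,o)). Then d'(x₁,x₂) = d(x₁,o) + d(x₂,o) − 2 R_o(x₁,x₂) defines a pseudometric on X: it is nonnegative, symmetric, vanishes on the diagonal, and satisfies the triangle inequality. -/
/-! Concatenating paths shows that `R_o` is an ultrametric-type function,
`min (R_o(x, y)) (R_o(y, z)) ≤ R_o(x, z)`, and it is bounded by `d(x, o)` and `d(y, o)`.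
These two facts give the triangle inequality for `d'`: with `m ≤ M` the two radii on the
right, `d'(x, y) + d'(y, z) - d'(x, z) = 2 (d(y, o) - M) + 2 (R_o(x, z) - m) ≥ 0`. -/

open Metric

namespace Kerr

variable {X : Type*} [PseudoMetricSpace X]

/-- Since `sSup ∅ = 0` in `ℝ`, this is `0` when `x` and `y` are not joined by any path. -/
noncomputable def radius (o x y : X) : ℝ :=
  sSup {r : ℝ | 0 ≤ r ∧ JoinedIn (ball o r)ᶜ x y}

noncomputable def dist' (o x y : X) : ℝ :=
  dist x o + dist y o - 2 * radius o x y

variable (o : X)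

lemma le_dist_of_joinedIn_compl_ball {x y : X} {r : ℝ} (h : JoinedIn (ball o r)ᶜ x y) :
    r ≤ dist x o := by
  simpa [mem_ball, not_lt] using h.source_mem

lemma radius_nonneg (x y : X) : 0 ≤ radius o x y :=
  Real.sSup_nonneg fun _ hr => hr.1

lemma radius_le_dist_left (x y : X) : radius o x y ≤ dist x o :=
  Real.sSup_le (fun _ hr => le_dist_of_joinedIn_compl_ball o hr.2) dist_nonneg

lemma radius_comm (x y : X) : radius o x y = radius o y x := by
  simp only [radius]
  congr 1
  ext r
  exact and_congr_right fun _ => ⟨JoinedIn.symm, JoinedIn.symm⟩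

lemma radius_le_dist_right (x y : X) : radius o x y ≤ dist y o :=
  radius_comm o x y ▸ radius_le_dist_left o y x

lemma radius_self (x : X) : radius o x x = dist x o := by
  have hset : {r : ℝ | 0 ≤ r ∧ JoinedIn (ball o r)ᶜ x x} = Set.Icc 0 (dist x o) := by
    ext r
    refine ⟨fun hr => ⟨hr.1, le_dist_of_joinedIn_compl_ball o hr.2⟩, fun hr => ⟨hr.1, ?_⟩⟩
    exact JoinedIn.refl (by simpa [mem_ball, not_lt] using hr.2)
  rw [radius, hset, csSup_Icc dist_nonneg]

lemma joinedIn_compl_ball_of_lt_radius {x y : X} {c : ℝ} (hc0 : 0 ≤ c)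
    (hc : c < radius o x y) : JoinedIn (ball o c)ᶜ x y := by
  have hne : {r : ℝ | 0 ≤ r ∧ JoinedIn (ball o r)ᶜ x y}.Nonempty := by
    refine Set.nonempty_iff_ne_empty.2 fun hempty => hc.not_ge ?_
    rwa [radius, hempty, Real.sSup_empty]
  obtain ⟨r, hr, hcr⟩ := exists_lt_of_lt_csSup hne hc
  exact hr.2.mono (Set.compl_subset_compl.2 (ball_subset_ball hcr.le))

lemma min_radius_le (x y z : X) : min (radius o x y) (radius o y z) ≤ radius o x z := by
  refine le_of_forall_gt_imp_ge_of_dense fun c hc => ?_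
  by_contra! hcmin
  have hc0 : 0 ≤ c := (radius_nonneg o x z).trans hc.le
  have hjoined : JoinedIn (ball o c)ᶜ x z :=
    (joinedIn_compl_ball_of_lt_radius o hc0 (lt_min_iff.1 hcmin).1).trans
      (joinedIn_compl_ball_of_lt_radius o hc0 (lt_min_iff.1 hcmin).2)
  have hbdd : BddAbove {r : ℝ | 0 ≤ r ∧ JoinedIn (ball o r)ᶜ x z} :=
    ⟨dist x o, fun _ hr => le_dist_of_joinedIn_compl_ball o hr.2⟩
  exact hc.not_ge (le_csSup hbdd ⟨hc0, hjoined⟩)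

lemma dist'_self (x : X) : dist' o x x = 0 := by
  rw [dist', radius_self]
  ring

lemma dist'_nonneg (x y : X) : 0 ≤ dist' o x y := by
  have := radius_le_dist_left o x y
  have := radius_le_dist_right o x y
  rw [dist']
  linarith

lemma dist'_comm (x y : X) : dist' o x y = dist' o y x := by
  rw [dist', dist', radius_comm]
  ring

lemma dist'_triangle (x y z : X) : dist' o x z ≤ dist' o x y + dist' o y z := by
  have hmin := min_radius_le o x y z
  have hmax : max (radius o x y) (radius o y z) ≤ dist y o :=
    max_le (radius_le_dist_right o x y) (radius_le_dist_left o y z)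
  have := min_add_max (radius o x y) (radius o y z)
  rw [dist', dist', dist']
  linarith

end Kerr

open Kerr in
theorem stmt4_general {X : Type*} [MetricSpace X]
    (o : X) :
    let R : X → X → ℝ := fun x₁ x₂ =>
      sSup {r : ℝ | 0 ≤ r ∧ JoinedIn (Metric.ball o r)ᶜ x₁ x₂}
    let d' : X → X → ℝ := fun x₁ x₂ => dist x₁ o + dist x₂ o - 2 * R x₁ x₂
    (∀ x, d' x x = 0) ∧ (∀ x₁ x₂, 0 ≤ d' x₁ x₂) ∧ (∀ x₁ x₂, d' x₁ x₂ = d' x₂ x₁) ∧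
      (∀ x₁ x₂ x₃, d' x₁ x₃ ≤ d' x₁ x₂ + d' x₂ x₃) :=
  ⟨dist'_self o, dist'_nonneg o, dist'_comm o, dist'_triangle o⟩

/-- On a geodesic metric space `X` with basepoint `o`, Kerr's function
`d'(x₁,x₂) = d(x₁,o) + d(x₂,o) - 2 R_o(x₁,x₂)`, where `R_o(x₁,x₂)` is the supremum of the
radii `r ≥ 0` such that `x₁` and `x₂` lie in the same path component of the complement of the
open ball `B(o,r)`, is a pseudometric: nonnegative, symmetric, zero on the diagonal, and
satisfying the triangle inequality. -/
theorem stmt4 {X : Type*} [MetricSpace X]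
    (hgeo : ∀ x y : X, ∃ γ : ℝ → X, γ 0 = x ∧ γ (dist x y) = y ∧
      ∀ s ∈ Set.Icc (0 : ℝ) (dist x y), ∀ t ∈ Set.Icc (0 : ℝ) (dist x y),
        dist (γ s) (γ t) = |s - t|)
    (o : X) :
    let R : X → X → ℝ := fun x₁ x₂ =>
      sSup {r : ℝ | 0 ≤ r ∧ JoinedIn (Metric.ball o r)ᶜ x₁ x₂}
    let d' : X → X → ℝ := fun x₁ x₂ => dist x₁ o + dist x₂ o - 2 * R x₁ x₂
    (∀ x, d' x x = 0) ∧ (∀ x₁ x₂, 0 ≤ d' x₁ x₂) ∧ (∀ x₁ x₂, d' x₁ x₂ = d' x₂ x₁) ∧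
      (∀ x₁ x₂ x₃, d' x₁ x₃ ≤ d' x₁ x₂ + d' x₂ x₃) :=
  stmt4_general o
end

section
/- Let G be a group with length function |·|, H ≤ G a finite-index subgroup, and C ≥ 1, B > 0. Suppose H admits an affine action σ on ℓ¹ whose linear part is a representation by operators of norm at most C and whose cocycle b satisfies ‖b(t)‖₁ ≥ |t| − B for all t ∈ H. Then there exists B̃ > 0 such that G admits an affine action σ̃ on ℓ¹(G/H; ℓ¹) (which is isometrically isomorphic to ℓ¹ when G is countable) whose linear part consists of operators of norm at most C and whose cocycle b̃ satisfies ‖b̃(s)‖ ≥ |s| − B̃ for all s ∈ G. -/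
/-!
Induce the action: `π̃(s)` permutes the finitely many coordinates of `ℓ¹(G/H; E)` and applies an
operator `π(α(s, ·))` on each, so it has norm at most `C`, and the cocycle identity for `α` makes
`π̃` a representation and `b̃` a cocycle for it. For the lower bound, `‖b̃(s)‖` dominates its
coordinate `b(α(s, x))`, and `s = ω(s x) α(s, x) ω(x)⁻¹` with coset representatives from a finite
set, so `|α(s, x)| ≥ |s| - const`.
-/

noncomputable section

section CosetCocycle

variable {G : Type*} [Group G] (H : Subgroup G)

/-- `α(s, x) = ω(s • x)⁻¹ s ω(x)` for the section `ω = Quotient.out` of `G → G ⧸ H`. -/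
def cosetCocycle (s : G) (x : G ⧸ H) : H :=
  ⟨(s • x).out⁻¹ * (s * x.out), QuotientGroup.eq.mp <| by
    rw [QuotientGroup.out_eq', ← smul_eq_mul, MulAction.Quotient.mk_smul_out]⟩

theorem coe_cosetCocycle (s : G) (x : G ⧸ H) :
    (cosetCocycle H s x : G) = (s • x).out⁻¹ * (s * x.out) := rfl

theorem cosetCocycle_one (x : G ⧸ H) : cosetCocycle H 1 x = 1 :=
  Subtype.ext <| by simp [coe_cosetCocycle]

theorem cosetCocycle_mul (s t : G) (x : G ⧸ H) :
    cosetCocycle H (s * t) x = cosetCocycle H s (t • x) * cosetCocycle H t x :=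
  Subtype.ext <| by simp only [coe_cosetCocycle, Subgroup.coe_mul, mul_smul]; group

theorem cosetCocycle_mul_inv_smul (s t : G) (x : G ⧸ H) :
    cosetCocycle H (s * t) ((s * t)⁻¹ • x) =
      cosetCocycle H s (s⁻¹ • x) * cosetCocycle H t ((s * t)⁻¹ • x) := by
  rw [cosetCocycle_mul, mul_inv_rev, mul_smul, smul_inv_smul]

theorem le_len_cosetCocycle {len : G → ℝ} (hsub : ∀ s t : G, len (s * t) ≤ len s + len t)
    (s : G) (x : G ⧸ H) :
    len s ≤ len (s • x).out + len (cosetCocycle H s x) + len x.out⁻¹ := by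
  have hs : s = (s • x).out * cosetCocycle H s x * x.out⁻¹ := by
    rw [coe_cosetCocycle]; group
  calc len s = len ((s • x).out * cosetCocycle H s x * x.out⁻¹) := congrArg len hs
    _ ≤ len ((s • x).out * cosetCocycle H s x) + len x.out⁻¹ := hsub _ _
    _ ≤ _ := by gcongr; exact hsub _ _

end CosetCocycle

theorem lp_one_norm_eq_sum {ι : Type*} [Fintype ι] {F : ι → Type*}
    [∀ i, NormedAddCommGroup (F i)] (f : lp F 1) : ‖f‖ = ∑ i, ‖f i‖ := by
  rw [lp.norm_eq_tsum_rpow (by norm_num) f, tsum_fintype]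
  simp

section InducedAction

variable {G : Type*} [Group G] {H : Subgroup G} [Finite (G ⧸ H)]
  {𝕜 : Type*} [NontriviallyNormedField 𝕜] {E : Type*} [NormedAddCommGroup E] [NormedSpace 𝕜 E]
  (π : H →* (E ≃L[𝕜] E))

local notation "Ind" => lp (fun _ : G ⧸ H => E) 1

def inducedLinearMap (s : G) : Ind →ₗ[𝕜] Ind where
  toFun f := ⟨fun x => π (cosetCocycle H s (s⁻¹ • x)) (f (s⁻¹ • x)), Memℓp.all _⟩
  map_add' f g := lp.ext <| funext fun _ => map_add _ (f _) (g _)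
  map_smul' c f := lp.ext <| funext fun _ => map_smul _ c (f _)

theorem inducedLinearMap_apply (s : G) (f : Ind) (x : G ⧸ H) :
    inducedLinearMap π s f x = π (cosetCocycle H s (s⁻¹ • x)) (f (s⁻¹ • x)) := rfl

theorem inducedLinearMap_mul (s t : G) :
    inducedLinearMap π (s * t) = inducedLinearMap π s ∘ₗ inducedLinearMap π t := by
  refine LinearMap.ext fun f => lp.ext <| funext fun x => ?_
  rw [LinearMap.comp_apply, inducedLinearMap_apply, cosetCocycle_mul_inv_smul, map_mul,
    mul_inv_rev, mul_smul]
  rfl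

theorem inducedLinearMap_one : inducedLinearMap π (1 : G) = LinearMap.id :=
  LinearMap.ext fun f => lp.ext <| funext fun x => by
    simp only [inducedLinearMap_apply, cosetCocycle_one, map_one, inv_one, one_smul]
    rfl

theorem norm_inducedLinearMap_apply_le {C : ℝ} (s : G)
    (hC : ∀ x, ‖(π (cosetCocycle H s x)).toContinuousLinearMap‖ ≤ C) (f : Ind) :
    ‖inducedLinearMap π s f‖ ≤ C * ‖f‖ := by
  cases nonempty_fintype (G ⧸ H)
  rw [lp_one_norm_eq_sum, lp_one_norm_eq_sum, Finset.mul_sum]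
  calc ∑ x, ‖inducedLinearMap π s f x‖ ≤ ∑ x, C * ‖f (s⁻¹ • x)‖ :=
        Finset.sum_le_sum fun x _ => ((π _).toContinuousLinearMap.le_opNorm _).trans <|
          mul_le_mul_of_nonneg_right (hC _) (norm_nonneg _)
    _ = ∑ x, C * ‖f x‖ := Equiv.sum_comp (MulAction.toPerm s⁻¹) (fun x => C * ‖f x‖)

def inducedContinuousLinearMap (s : G) : Ind →L[𝕜] Ind :=
  (inducedLinearMap π s).mkContinuous _ <| norm_inducedLinearMap_apply_le π s
    (C := ∑ᶠ x, ‖(π (cosetCocycle H s x)).toContinuousLinearMap‖) fun x =>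
      single_le_finsum (f := fun x => ‖(π (cosetCocycle H s x)).toContinuousLinearMap‖) x
        (Set.toFinite _) fun _ => norm_nonneg _

def inducedContinuousRep : G →* (Ind →L[𝕜] Ind) where
  toFun := inducedContinuousLinearMap π
  map_one' := ContinuousLinearMap.coe_injective (inducedLinearMap_one π)
  map_mul' s t := ContinuousLinearMap.coe_injective (inducedLinearMap_mul π s t)

def inducedRep : G →* (Ind ≃L[𝕜] Ind) :=
  (ContinuousLinearEquiv.unitsEquiv 𝕜 Ind).toMonoidHom.comp (inducedContinuousRep π).toHomUnits

theorem inducedRep_apply (s : G) (f : Ind) : inducedRep π s f = inducedLinearMap π s f := rfl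

theorem norm_inducedRep_le {C : ℝ} (hπ : ∀ t, ‖(π t).toContinuousLinearMap‖ ≤ C) (s : G) :
    ‖(inducedRep π s).toContinuousLinearMap‖ ≤ C :=
  ContinuousLinearMap.opNorm_le_bound _ ((norm_nonneg _).trans (hπ 1))
    (norm_inducedLinearMap_apply_le π s fun _ => hπ _)

variable {π} (b : H → E)

def inducedCocycle (s : G) : Ind := ⟨fun x => b (cosetCocycle H s (s⁻¹ • x)), Memℓp.all _⟩

theorem inducedCocycle_apply (s : G) (x : G ⧸ H) :
    inducedCocycle b s x = b (cosetCocycle H s (s⁻¹ • x)) := rfl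

theorem inducedCocycle_mul (hb : ∀ s t, b (s * t) = π s (b t) + b s) (s t : G) :
    inducedCocycle b (s * t) = inducedRep π s (inducedCocycle b t) + inducedCocycle b s :=
  lp.ext <| funext fun x => by
    rw [lp.coeFn_add, Pi.add_apply, inducedRep_apply, inducedLinearMap_apply, inducedCocycle_apply,
      inducedCocycle_apply, inducedCocycle_apply, cosetCocycle_mul_inv_smul, hb, mul_inv_rev,
      mul_smul]

theorem norm_le_norm_inducedCocycle (s : G) (x : G ⧸ H) :
    ‖b (cosetCocycle H s x)‖ ≤ ‖inducedCocycle b s‖ := by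
  simpa only [inducedCocycle_apply, inv_smul_smul] using
    lp.norm_apply_le_norm one_ne_zero (inducedCocycle b s) (s • x)

end InducedAction

end

theorem stmt12_general {G : Type*} [Group G] (H : Subgroup G) [H.FiniteIndex]
    (len : G → ℝ) (hsub : ∀ s t : G, len (s * t) ≤ len s + len t)
    (C : ℝ) (B : ℝ)
    (π : H →* (lp (fun _ : ℕ => ℝ) 1 ≃L[ℝ] lp (fun _ : ℕ => ℝ) 1))
    (hπ : ∀ t : H, ‖(π t).toContinuousLinearMap‖ ≤ C)
    (b : H → lp (fun _ : ℕ => ℝ) 1)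
    (hb : ∀ s t : H, b (s * t) = π s (b t) + b s)
    (hblow : ∀ t : H, len (t : G) - B ≤ ‖b t‖) :
    ∃ B' : ℝ, 0 < B' ∧
      ∃ (π' : G →* (lp (fun _ : G ⧸ H => lp (fun _ : ℕ => ℝ) 1) 1 ≃L[ℝ]
            lp (fun _ : G ⧸ H => lp (fun _ : ℕ => ℝ) 1) 1))
        (b' : G → lp (fun _ : G ⧸ H => lp (fun _ : ℕ => ℝ) 1) 1),
        (∀ s : G, ‖(π' s).toContinuousLinearMap‖ ≤ C) ∧
        (∀ s t : G, b' (s * t) = π' s (b' t) + b' s) ∧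
        ∀ s : G, len s - B' ≤ ‖b' s‖ := by
  obtain ⟨x, hx⟩ := Finite.exists_max fun y : G ⧸ H => len y.out
  refine ⟨max (len x.out + len x.out⁻¹ + B) 1, by positivity, inducedRep π, inducedCocycle b,
    norm_inducedRep_le π hπ, inducedCocycle_mul b hb, fun s => ?_⟩
  have hα := le_len_cosetCocycle H hsub s x
  calc len s - max (len x.out + len x.out⁻¹ + B) 1 ≤ len (cosetCocycle H s x : G) - B := by
        linarith [le_max_left (len x.out + len x.out⁻¹ + B) 1, hx (s • x)]
    _ ≤ ‖b (cosetCocycle H s x)‖ := hblow _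
    _ ≤ _ := norm_le_norm_inducedCocycle b s x

/-- Induction of affine actions from a finite-index subgroup: if `H ≤ G` has finite index,
`|·|` is a length function on `G`, and `H` admits an affine action on `ℓ¹` whose linear part
is a representation by operators of norm at most `C` and whose cocycle `b` satisfies
`‖b t‖ ≥ |t| - B`, then `G` admits an affine action on `ℓ¹(G/H; ℓ¹)` whose linear part
consists of operators of norm at most `C` and whose cocycle `b̃` satisfies
`‖b̃ s‖ ≥ |s| - B̃` for some constant `B̃ > 0`. -/
theorem stmt12 {G : Type*} [Group G] (H : Subgroup G) [H.FiniteIndex]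
    (len : G → ℝ) (hlen1 : len 1 = 0) (hsub : ∀ s t : G, len (s * t) ≤ len s + len t)
    (C : ℝ) (hC : 1 ≤ C) (B : ℝ) (hB : 0 < B)
    (π : H →* (lp (fun _ : ℕ => ℝ) 1 ≃L[ℝ] lp (fun _ : ℕ => ℝ) 1))
    (hπ : ∀ t : H, ‖(π t).toContinuousLinearMap‖ ≤ C)
    (b : H → lp (fun _ : ℕ => ℝ) 1)
    (hb : ∀ s t : H, b (s * t) = π s (b t) + b s)
    (hblow : ∀ t : H, len (t : G) - B ≤ ‖b t‖) :
    ∃ B' : ℝ, 0 < B' ∧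
      ∃ (π' : G →* (lp (fun _ : G ⧸ H => lp (fun _ : ℕ => ℝ) 1) 1 ≃L[ℝ]
            lp (fun _ : G ⧸ H => lp (fun _ : ℕ => ℝ) 1) 1))
        (b' : G → lp (fun _ : G ⧸ H => lp (fun _ : ℕ => ℝ) 1) 1),
        (∀ s : G, ‖(π' s).toContinuousLinearMap‖ ≤ C) ∧
        (∀ s t : G, b' (s * t) = π' s (b' t) + b' s) ∧
        ∀ s : G, len s - B' ≤ ‖b' s‖ :=
  stmt12_general H len hsub C B π hπ b hb hblow
end
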